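/- The operators S^z = (1/2)∑ₙ σₙ^z and S^± = ∑ₙ q^{(σ₁^z+⋯+σ_{n-1}^z)/2} (σₙ^±/2) q^{-(σ_{n+1}^z+⋯+σ_N^z)/2} on (ℂ²)^{⊗N} satisfy the quantum group relations [S^z, S^±] = ±S^± and [S^+, S^-] = (q^{2S^z} - q^{-2S^z})/(q - q⁻¹). -/

import Mathlib

open Matrix Finset

/-- Eigenvalue of `σ^z` on the basis vector labelled by a spin: `0 ↦ +1`, `1 ↦ -1`. -/
def spinZ : Fin 2 → ℤ := fun i => if i = 0 then 1 else -1

/-- The operator `S^z = (1/2) ∑ₙ σₙ^z` on `(ℂ²)^{⊗N}` (diagonal in the spin basis). -/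
noncomputable def Sz (N : ℕ) : Matrix (Fin N → Fin 2) (Fin N → Fin 2) ℂ :=
  Matrix.diagonal (fun s => ((∑ n, spinZ (s n) : ℤ) : ℂ) / 2)

/-- `S^+ = ∑ₙ q^{(σ₁^z+⋯+σ_{n-1}^z)/2} (σₙ⁺/2) q^{-(σ_{n+1}^z+⋯+σ_N^z)/2}`,
where `r` is a fixed square root of `q` (so that `q^{A/2} = r^{A}` on integer
eigenvalues of `A`). -/
noncomputable def Sp (N : ℕ) (r : ℂ) : Matrix (Fin N → Fin 2) (Fin N → Fin 2) ℂ :=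
  ∑ n : Fin N, (fun s s' =>
    if s' n = 1 ∧ s = Function.update s' n 0 then
      r ^ (∑ m ∈ univ.filter (fun m => m < n), spinZ (s' m)) *
        r ^ (-(∑ m ∈ univ.filter (fun m => n < m), spinZ (s' m)))
    else 0)

/-- `S^- = ∑ₙ q^{(σ₁^z+⋯+σ_{n-1}^z)/2} (σₙ⁻/2) q^{-(σ_{n+1}^z+⋯+σ_N^z)/2}`. -/
noncomputable def Sm (N : ℕ) (r : ℂ) : Matrix (Fin N → Fin 2) (Fin N → Fin 2) ℂ :=
  ∑ n : Fin N, (fun s s' =>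
    if s' n = 0 ∧ s = Function.update s' n 1 then
      r ^ (∑ m ∈ univ.filter (fun m => m < n), spinZ (s' m)) *
        r ^ (-(∑ m ∈ univ.filter (fun m => n < m), spinZ (s' m)))
    else 0)

/-- `q^{2S^z}` and `q^{-2S^z}` by functional calculus: `2S^z` is diagonal with
integer eigenvalues `∑ₙ σₙ^z`. -/
noncomputable def qPow2Sz (N : ℕ) (q : ℂ) (ε : ℤ) :
    Matrix (Fin N → Fin 2) (Fin N → Fin 2) ℂ :=
  Matrix.diagonal (fun s => q ^ (ε * ∑ n, spinZ (s n)))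

/-!
Write `S^± = ∑ₙ Eₙ^±`, where `Eₙ^±` flips the spin at site `n` and multiplies by the string
weight `q^{(σ₁^z + ⋯ + σ_{n-1}^z - σ_{n+1}^z - ⋯ - σ_N^z)/2}`. Each `Eₙ^±` shifts `2S^z` by `±2`,
which gives `[S^z, S^±] = ±S^±`. For `n ≠ m` the changes that `Eₙ^+` and `Eₘ^-` make to each
other's string weights cancel, so they commute and `[S^+, S^-] = ∑ₙ [Eₙ^+, Eₙ^-]`. This is
diagonal with entries `∑ₙ σₙ^z q^{σ_{<n} - σ_{>n}}`, and multiplied by `q - q⁻¹` the sum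
telescopes to `q^{2S^z} - q^{-2S^z}`.
-/

namespace SpinChain

open Function

attribute [local instance] LieRing.ofAssociativeRing

theorem sum_apply_update {α β M : Type*} [DecidableEq α] [AddCommGroup M] (P : Finset α)
    (g : α → β) (i : α) (v : β) (φ : β → M) :
    ∑ k ∈ P, φ (update g i v k) = ∑ k ∈ P, φ (g k) + if i ∈ P then φ v - φ (g i) else 0 := by
  split_ifs with hi
  · rw [← add_sum_erase P _ hi, ← add_sum_erase P (fun k => φ (g k)) hi,
      update_self, sum_congr rfl fun k hk => by rw [update_of_ne (ne_of_mem_erase hk)]]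
    abel
  · rw [add_zero]
    exact sum_congr rfl fun k hk => by rw [update_of_ne (ne_of_mem_of_not_mem hk hi)]

theorem zpow_sub_zpow_neg {K : Type*} [Field K] {q : K} {x : ℤ}
    (hx : x = 1 ∨ x = -1) : q ^ x - q ^ (-x) = x * (q - q⁻¹) := by
  rcases hx with rfl | rfl
  · simp
  · simp only [_root_.zpow_neg_one, neg_neg, zpow_one]
    push_cast
    ring

theorem sub_inv_mul_sum_zpow_telescope {K : Type*} [Field K] {q : K} (hq : q ≠ 0) {N : ℕ}
    (x : Fin N → ℤ) (hx : ∀ n, x n = 1 ∨ x n = -1) :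
    (q - q⁻¹) * ∑ n, (x n : K) *
        q ^ (∑ m ∈ univ.filter (· < n), x m - ∑ m ∈ univ.filter (n < ·), x m) =
      q ^ (∑ n, x n) - q ^ (-∑ n, x n) := by
  obtain ⟨T, hT⟩ : ∃ T, T = ∑ n, x n := ⟨_, rfl⟩
  obtain ⟨P, hP⟩ : ∃ P : ℕ → ℤ, ∀ k, P k = ∑ m ∈ univ.filter (fun m : Fin N => (m : ℕ) < k), x m :=
    ⟨_, fun _ => rfl⟩
  have hbefore (n : Fin N) : ∑ m ∈ univ.filter (· < n), x m = P n := by rw [hP]; rfl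
  have hsucc (n : Fin N) : P (n + 1) = P n + x n := by
    have : univ.filter (fun m : Fin N => (m : ℕ) < n + 1) =
        insert n (univ.filter (fun m : Fin N => (m : ℕ) < n)) := by
      ext m
      simp only [mem_filter, mem_univ, true_and, mem_insert, Fin.ext_iff]
      omega
    rw [hP, hP, this, sum_insert (by simp), add_comm]
  have hafter (n : Fin N) : ∑ m ∈ univ.filter (n < ·), x m = T - P (n + 1) := by
    rw [hT, hP, eq_sub_iff_add_eq, add_comm,
      ← sum_filter_add_sum_filter_not univ (fun m : Fin N => (m : ℕ) < n + 1)]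
    congr 2
    ext m
    simp only [mem_filter, mem_univ, true_and, Fin.lt_def]
    omega
  have hstep (n : Fin N) : (q - q⁻¹) * (x n * q ^ (P n - (T - P (n + 1)))) =
      q ^ (2 * P (n + 1) - T) - q ^ (2 * P n - T) := by
    obtain ⟨a, ha⟩ : ∃ a, a = 2 * P n - T + x n := ⟨_, rfl⟩
    rw [hsucc, show P n - (T - (P n + x n)) = a by omega,
      show 2 * (P n + x n) - T = a + x n by omega, show 2 * P n - T = a + -x n by omega,
      zpow_add₀ hq, zpow_add₀ hq, ← mul_sub, zpow_sub_zpow_neg (hx n)]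
    ring
  have hP0 : P 0 = 0 := by simp [hP]
  have hPN : P N = T := by simp [hP, hT]
  rw [mul_sum, sum_congr rfl fun n _ => by rw [hbefore, hafter, hstep],
    Fin.sum_univ_eq_sum_range (fun k => q ^ (2 * P (k + 1) - T) - q ^ (2 * P k - T)),
    sum_range_sub (fun k => q ^ (2 * P k - T)), hPN, hP0, ← hT]
  ring_nf

section SiteFlip

variable {ι κ R : Type*} [Fintype ι] [DecidableEq ι] [Fintype κ] [DecidableEq κ] [CommSemiring R]

def siteFlip (n : ι) (a b : κ) (f : (ι → κ) → R) : Matrix (ι → κ) (ι → κ) R :=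
  fun s s' => if s' n = a ∧ s = update s' n b then f s' else 0

theorem siteFlip_mul_siteFlip_apply (n m : ι) (a b c d : κ) (f g : (ι → κ) → R) (s s' : ι → κ) :
    (siteFlip n a b f * siteFlip m c d g) s s' =
      if s' m = c ∧ update s' m d n = a ∧ s = update (update s' m d) n b then
        f (update s' m d) * g s'
      else 0 := by
  rw [Matrix.mul_apply, sum_eq_single (update s' m d)]
  · simp only [siteFlip]
    split_ifs <;> simp_all
  · intro t _ ht
    simp only [siteFlip]
    split_ifs <;> simp_all
  · simp

theorem commute_siteFlip {n m : ι} (hnm : n ≠ m) {a b c d : κ} {f g : (ι → κ) → R}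
    (hfg : ∀ s, s n = a → s m = c → f (update s m d) * g s = g (update s n b) * f s) :
    Commute (siteFlip n a b f) (siteFlip m c d g) := by
  ext s s'
  rw [siteFlip_mul_siteFlip_apply, siteFlip_mul_siteFlip_apply, update_of_ne hnm,
    update_of_ne hnm.symm, update_comm hnm]
  by_cases h : s' n = a ∧ s' m = c
  · rw [hfg s' h.1 h.2]
    simp only [h, true_and]
  · rw [if_neg (by tauto), if_neg (by tauto)]

theorem siteFlip_mul_siteFlip_self (n : ι) (a b : κ) (f g : (ι → κ) → R) :
    siteFlip n a b f * siteFlip n b a g =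
      Matrix.diagonal fun s => if s n = b then f (update s n a) * g s else 0 := by
  ext s s'
  rw [siteFlip_mul_siteFlip_apply, Matrix.diagonal_apply, update_idem, update_self]
  by_cases hs : s = s'
  · subst hs
    by_cases h : s n = b
    · rw [if_pos ⟨h, rfl, by rw [← h, update_eq_self]⟩, if_pos rfl, if_pos h]
    · simp [h]
  · rw [if_neg hs, if_neg]
    rintro ⟨h, -, rfl⟩
    exact hs (by rw [← h, update_eq_self])

end SiteFlip

variable {N : ℕ}

theorem spinZ_eq_one_or_neg_one (i : Fin 2) : spinZ i = 1 ∨ spinZ i = -1 := by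
  fin_cases i <;> simp [spinZ]

def spinBefore (n : Fin N) (s : Fin N → Fin 2) : ℤ :=
  ∑ m ∈ univ.filter (fun m => m < n), spinZ (s m)

def spinAfter (n : Fin N) (s : Fin N → Fin 2) : ℤ :=
  ∑ m ∈ univ.filter (fun m => n < m), spinZ (s m)

noncomputable def stringWeight (r : ℂ) (n : Fin N) (s : Fin N → Fin 2) : ℂ :=
  r ^ spinBefore n s * r ^ (-spinAfter n s)

theorem Sp_eq_sum_siteFlip (r : ℂ) : Sp N r = ∑ n, siteFlip n 1 0 (stringWeight r n) := rfl

theorem Sm_eq_sum_siteFlip (r : ℂ) : Sm N r = ∑ n, siteFlip n 0 1 (stringWeight r n) := rfl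

theorem spinBefore_update (n m : Fin N) (s : Fin N → Fin 2) (v : Fin 2) :
    spinBefore n (update s m v) = spinBefore n s + if m < n then spinZ v - spinZ (s m) else 0 := by
  simp only [spinBefore, sum_apply_update, mem_filter, mem_univ, true_and]

theorem spinAfter_update (n m : Fin N) (s : Fin N → Fin 2) (v : Fin 2) :
    spinAfter n (update s m v) = spinAfter n s + if n < m then spinZ v - spinZ (s m) else 0 := by
  simp only [spinAfter, sum_apply_update, mem_filter, mem_univ, true_and]

theorem stringWeight_update_self (r : ℂ) (n : Fin N) (s : Fin N → Fin 2) (v : Fin 2) :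
    stringWeight r n (update s n v) = stringWeight r n s := by
  simp [stringWeight, spinBefore_update, spinAfter_update]

theorem stringWeight_eq_zpow {r : ℂ} (hr : r ≠ 0) (n : Fin N) (s : Fin N → Fin 2) :
    stringWeight r n s = r ^ (spinBefore n s - spinAfter n s) := by
  rw [stringWeight, ← zpow_add₀ hr, sub_eq_add_neg]

theorem stringWeight_mul_self {r q : ℂ} (hr : r ≠ 0) (hrq : r ^ 2 = q) (n : Fin N)
    (s : Fin N → Fin 2) :
    stringWeight r n s * stringWeight r n s = q ^ (spinBefore n s - spinAfter n s) := by
  rw [stringWeight_eq_zpow hr, ← mul_zpow, ← sq, hrq]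

theorem stringWeight_cross {r : ℂ} (hr : r ≠ 0) {n m : Fin N} (hnm : n ≠ m) {s : Fin N → Fin 2}
    (h1 : s n = 1) (h0 : s m = 0) :
    stringWeight r n (update s m 1) * stringWeight r m s =
      stringWeight r m (update s n 0) * stringWeight r n s := by
  simp only [stringWeight_eq_zpow hr, ← zpow_add₀ hr, spinBefore_update, spinAfter_update, h0, h1]
  congr 1
  rcases lt_or_gt_of_ne hnm with h | h <;> simp [h, h.not_gt, spinZ] <;> ring

theorem Sz_lie_siteFlip (n : Fin N) (a b : Fin 2) (f : (Fin N → Fin 2) → ℂ) :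
    ⁅Sz N, siteFlip n a b f⁆ = (((spinZ b - spinZ a : ℤ) : ℂ) / 2) • siteFlip n a b f := by
  ext s s'
  rw [Ring.lie_def, Matrix.sub_apply, Sz, Matrix.diagonal_mul, Matrix.mul_diagonal,
    Matrix.smul_apply, siteFlip]
  split_ifs with h
  · obtain ⟨ha, rfl⟩ := h
    rw [sum_apply_update, if_pos (mem_univ n), ha]
    push_cast
    ring
  · simp

theorem Sz_lie_Sp (r : ℂ) : ⁅Sz N, Sp N r⁆ = Sp N r := by
  rw [Sp_eq_sum_siteFlip, lie_sum]
  simp [Sz_lie_siteFlip, spinZ]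

theorem Sz_lie_Sm (r : ℂ) : ⁅Sz N, Sm N r⁆ = -Sm N r := by
  rw [Sm_eq_sum_siteFlip, lie_sum]
  simp [Sz_lie_siteFlip, spinZ]

theorem lie_siteFlip_self {r q : ℂ} (hr : r ≠ 0) (hrq : r ^ 2 = q) (n : Fin N) :
    ⁅siteFlip n 1 0 (stringWeight r n), siteFlip n 0 1 (stringWeight r n)⁆ =
      Matrix.diagonal fun s => (spinZ (s n) : ℂ) * q ^ (spinBefore n s - spinAfter n s) := by
  rw [Ring.lie_def, siteFlip_mul_siteFlip_self, siteFlip_mul_siteFlip_self, Matrix.diagonal_sub]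
  congr 1
  funext s
  simp only [stringWeight_update_self, stringWeight_mul_self hr hrq]
  obtain h | h : s n = 0 ∨ s n = 1 := by omega
  all_goals simp [h, spinZ]

theorem Sp_lie_Sm {r q : ℂ} (hr : r ≠ 0) (hrq : r ^ 2 = q) :
    ⁅Sp N r, Sm N r⁆ = Matrix.diagonal fun s =>
      ∑ n, (spinZ (s n) : ℂ) * q ^ (spinBefore n s - spinAfter n s) := by
  have hcross (n m : Fin N) (hmn : m ≠ n) :
      ⁅siteFlip n 1 0 (stringWeight r n), siteFlip m 0 1 (stringWeight r m)⁆ = 0 :=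
    (commute_siteFlip hmn.symm fun _ h1 h0 => stringWeight_cross hr hmn.symm h1 h0).lie_eq
  rw [Sp_eq_sum_siteFlip, Sm_eq_sum_siteFlip, sum_lie_sum,
    sum_congr rfl fun n _ => sum_eq_single n (fun m _ => hcross n m) (by simp)]
  simp only [lie_siteFlip_self hr hrq]
  ext s s'
  simp [Matrix.sum_apply, Matrix.diagonal_apply]

end SpinChain

open SpinChain in
theorem quantum_group_relations_general (N : ℕ) (q r : ℂ)
    (hq : q ≠ 0) (hq2 : q ^ 2 ≠ 1) (hr : r ^ 2 = q) :
    Sz N * Sp N r - Sp N r * Sz N = Sp N r ∧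
    Sz N * Sm N r - Sm N r * Sz N = -(Sm N r) ∧
    Sp N r * Sm N r - Sm N r * Sp N r =
      (q - q⁻¹)⁻¹ • (qPow2Sz N q 1 - qPow2Sz N q (-1)) := by
  have hr0 : r ≠ 0 := by
    rintro rfl
    exact hq (by rw [← hr, zero_pow two_ne_zero])
  have hqq : q - q⁻¹ ≠ 0 := fun h => hq2 <| by
    rw [sub_eq_zero] at h
    rw [sq]
    nth_rewrite 1 [h]
    exact inv_mul_cancel₀ hq
  refine ⟨Sz_lie_Sp r, Sz_lie_Sm r, ?_⟩
  rw [← Ring.lie_def, Sp_lie_Sm hr0 hr, qPow2Sz, qPow2Sz, Matrix.diagonal_sub,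
    ← Matrix.diagonal_smul]
  congr 1
  funext s
  rw [Pi.smul_apply, smul_eq_mul, eq_inv_mul_iff_mul_eq₀ hqq, one_mul, neg_one_mul]
  exact sub_inv_mul_sum_zpow_telescope hq _ fun n => spinZ_eq_one_or_neg_one _

theorem quantum_group_relations (N : ℕ) (hN : 1 ≤ N) (q r : ℂ)
    (hq : q ≠ 0) (hq2 : q ^ 2 ≠ 1) (hr : r ^ 2 = q) :
    Sz N * Sp N r - Sp N r * Sz N = Sp N r ∧
    Sz N * Sm N r - Sm N r * Sz N = -(Sm N r) ∧
    Sp N r * Sm N r - Sm N r * Sp N r =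
      (q - q⁻¹)⁻¹ • (qPow2Sz N q 1 - qPow2Sz N q (-1)) :=
  quantum_group_relations_general N q r hq hq2 hr
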